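/- Let T be a measurable space, Q a Markov kernel on T, and A : T → (E →L[ℝ] E) measurable with A(t) invertible for every t and with a uniform bound C ≥ 1 such that ‖A(t)‖ ≤ C and ‖A(t)⁻¹‖ ≤ C for all t. Define the Markov kernel κ̂ on T × S by κ̂(t, v) := (Q t).map (s ↦ (s, ‖A(t)v‖⁻¹ • A(t)v)), and the bounded measurable potential φ̂(t,v) := log‖A(t)v‖. Then for every n ≥ 1 and every (t, v) ∈ T × S, Σ_{j=0}^{n-1} (κ̂ʲφ̂)(t,v) = ∫_{T^{n-1}} log‖A(s_{n-1}) ∘ ⋯ ∘ A(s_1) ∘ A(t) v‖ dQ^{n-1}_t(s_1, …, s_{n-1}), where Q^{n-1}_t is the law of the first n−1 steps of the Q-Markov chain started at t, i.e. the iterated composition-product Q(t, ds_1) Q(s_1, ds_2) ⋯ Q(s_{n-2}, ds_{n-1}). -/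

import Mathlib

/-!
Write `K j r x` (`expectedLogNormFrom` below) for the expected value of
`log ‖A(sⱼ₋₁) ⋯ A(s₁) A(r) x‖` along the `Q`-chain started at `r`, with `K 0 r x = log ‖x‖`.
The Markov property gives `K (j + 1) r x = ∫ K j s (A r x) dQ(r)`, and `K j r (c • x) =
log |c| + K j r x`, so the increment `K (j + 1) - K j` does not see the normalisation
`A r v ↦ A r v / ‖A r v‖` performed by `κ̂`. Hence `κ̂` maps the increment `K (j + 1) - K j` to
`K (j + 2) - K (j + 1)`; as `φ = K 1 - K 0` on the sphere, `κ̂ʲ φ = K (j + 1) - K j`, and the sum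
telescopes to `K n t v`, which is the right-hand side.
-/

open MeasureTheory ProbabilityTheory Filter
open scoped Classical

noncomputable section

abbrev Euc (d : ℕ) := EuclideanSpace ℝ (Fin d)

/-- Unit sphere of `EuclideanSpace ℝ (Fin d)`. -/
abbrev UnitSphere (d : ℕ) := (Metric.sphere (0 : Euc d) 1 : Set (Euc d))

/-- Projection of a nonzero vector onto the unit sphere (arbitrary unit value at `0`). -/
def projSphere {d : ℕ} (hd : 0 < d) (w : Euc d) : UnitSphere d :=
  if h : w = 0 then
    ⟨EuclideanSpace.single (⟨0, hd⟩ : Fin d) (1 : ℝ), by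
      simp [mem_sphere_zero_iff_norm, EuclideanSpace.norm_single]⟩
  else
    ⟨‖w‖⁻¹ • w, by
      have hw : ‖w‖ ≠ 0 := norm_ne_zero_iff.mpr h
      simp [mem_sphere_zero_iff_norm, norm_smul, abs_of_nonneg (norm_nonneg w),
        inv_mul_cancel₀ hw]⟩

/-- Product of matrices along a finite word, latest factor on the left:
`prodCLM A n t = A(t_{n-1}) ∘ ⋯ ∘ A(t_0)`. -/
def prodCLM {T : Type*} {d : ℕ} (A : T → (Euc d →L[ℝ] Euc d)) :
    (n : ℕ) → (Fin n → T) → (Euc d →L[ℝ] Euc d)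
  | 0, _ => ContinuousLinearMap.id ℝ (Euc d)
  | n + 1, t => (A (t (Fin.last n))).comp (prodCLM A n (fun i => t i.castSucc))

/-- The integral operator of a measure-valued transition function. -/
def measOp {Z : Type*} [MeasurableSpace Z] (q : Z → Measure Z) (u : Z → ℝ) : Z → ℝ :=
  fun z => ∫ w, u w ∂(q z)

/-- `j`-fold application of the integral operator. -/
def measOpIter {Z : Type*} [MeasurableSpace Z] (q : Z → Measure Z) : ℕ → (Z → ℝ) → (Z → ℝ)
  | 0 => fun u => u
  | n + 1 => fun u => measOp q (measOpIter q n u)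

/-- The law of the first `k` steps (after the start) of the `Q`-Markov chain started at
`t`: the iterated composition-product `Q(t,ds₁) Q(s₁,ds₂) ⋯ Q(s_{k-1},ds_k)`. -/
def chainLaw {T : Type*} [MeasurableSpace T] (Q : Kernel T T) :
    (k : ℕ) → T → Measure (Fin k → T)
  | 0 => fun _ => Measure.dirac (fun i : Fin 0 => i.elim0)
  | k + 1 => fun t => (Q t).bind (fun s => (chainLaw Q k s).map (Fin.cons s))

section Chain

variable {T : Type*} [MeasurableSpace T]

lemma measurable_finCons {k : ℕ} :
    Measurable fun p : T × (Fin k → T) => (Fin.cons p.1 p.2 : Fin (k + 1) → T) := by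
  have h := (MeasurableEquiv.piFinSuccAbove (fun _ : Fin (k + 1) => T) 0).symm.measurable
  simp only [MeasurableEquiv.piFinSuccAbove_symm_apply, Fin.insertNthEquiv_zero] at h
  exact h

def chainKernel (Q : Kernel T T) : (k : ℕ) → Kernel T (Fin k → T)
  | 0 => Kernel.deterministic (fun _ i => i.elim0) measurable_const
  | k + 1 => (Kernel.id ×ₖ chainKernel Q k).map (fun p => Fin.cons p.1 p.2) ∘ₖ Q

variable (Q : Kernel T T) [IsMarkovKernel Q]

instance isMarkovKernel_chainKernel : ∀ k, IsMarkovKernel (chainKernel Q k)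
  | 0 => by unfold chainKernel; infer_instance
  | k + 1 => by
    have := isMarkovKernel_chainKernel k
    have := Kernel.IsMarkovKernel.map (Kernel.id ×ₖ chainKernel Q k) measurable_finCons
    unfold chainKernel; infer_instance

lemma map_id_prod_chainKernel_apply (k : ℕ) (s : T) :
    (Kernel.id ×ₖ chainKernel Q k).map (fun p => (Fin.cons p.1 p.2 : Fin (k + 1) → T)) s
      = (chainKernel Q k s).map (Fin.cons s) := by
  rw [Kernel.map_apply _ measurable_finCons, Kernel.prod_apply, Kernel.id_apply,
    Measure.dirac_prod, Measure.map_map measurable_finCons measurable_prodMk_left]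
  rfl

lemma chainKernel_apply : ∀ (k : ℕ) (t : T), chainKernel Q k t = chainLaw Q k t
  | 0, t => by rw [chainKernel, Kernel.deterministic_apply]; rfl
  | k + 1, t => by
    rw [chainKernel, chainLaw, Kernel.comp_apply]
    congr 1 with s : 1
    rw [map_id_prod_chainKernel_apply, chainKernel_apply k s]

instance isProbabilityMeasure_chainLaw (k : ℕ) (t : T) : IsProbabilityMeasure (chainLaw Q k t) := by
  rw [← chainKernel_apply]; infer_instance

lemma integral_chainLaw_succ {k : ℕ} {u : (Fin (k + 1) → T) → ℝ} {t : T}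
    (hu : StronglyMeasurable u) (hui : Integrable u (chainLaw Q (k + 1) t)) :
    ∫ w, u w ∂chainLaw Q (k + 1) t = ∫ s, ∫ w, u (Fin.cons s w) ∂chainLaw Q k s ∂Q t := by
  rw [← chainKernel_apply] at hui ⊢
  rw [chainKernel, Kernel.integral_comp hui]
  congr 1 with s
  rw [map_id_prod_chainKernel_apply, chainKernel_apply]
  exact integral_map (measurable_finCons.comp measurable_prodMk_left).aemeasurable
    hu.aestronglyMeasurable

lemma stronglyMeasurable_integral_chainLaw {α : Type*} [MeasurableSpace α] {k : ℕ}
    {f : α × (Fin k → T) → ℝ} (hf : StronglyMeasurable f) {g : α → T} (hg : Measurable g) :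
    StronglyMeasurable fun a => ∫ w, f (a, w) ∂chainLaw Q k (g a) := by
  simpa only [Kernel.comap_apply, chainKernel_apply] using
    hf.integral_kernel_prod_right' (κ := (chainKernel Q k).comap g hg)

end Chain

lemma abs_log_sub_log_le {a b C : ℝ} (hC : 1 ≤ C) (ha : 0 ≤ a) (hb : 0 ≤ b)
    (hab : a ≤ C * b) (hba : b ≤ C * a) : |Real.log a - Real.log b| ≤ Real.log C := by
  rcases ha.eq_or_lt with rfl | ha
  · obtain rfl : b = 0 := by linarith
    simpa using Real.log_nonneg hC
  have hb : 0 < b := by nlinarith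
  have hC0 : 0 < C := by linarith
  rw [abs_sub_le_iff, sub_le_iff_le_add, sub_le_iff_le_add, ← Real.log_mul hC0.ne' hb.ne',
    ← Real.log_mul hC0.ne' ha.ne']
  exact ⟨Real.log_le_log ha hab, Real.log_le_log hb hba⟩

section Products

variable {T : Type*} {d : ℕ} (A : T → (Euc d →L[ℝ] Euc d))

lemma prodCLM_succ_apply (k : ℕ) (s : Fin (k + 1) → T) (x : Euc d) :
    prodCLM A (k + 1) s x = A (s (Fin.last k)) (prodCLM A k (fun i => s i.castSucc) x) := rfl

lemma prodCLM_cons : ∀ (k : ℕ) (s₀ : T) (s : Fin k → T),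
    prodCLM A (k + 1) (Fin.cons s₀ s) = (prodCLM A k s).comp (A s₀)
  | 0, _, _ => rfl
  | k + 1, s₀, s => by
    have hinit : (fun i : Fin (k + 1) => (Fin.cons s₀ s : Fin (k + 2) → T) i.castSucc)
        = Fin.cons s₀ (fun i : Fin k => s i.castSucc) := by
      ext i; cases i using Fin.cases <;> simp
    rw [prodCLM, hinit, prodCLM_cons k, Fin.cons_last]
    rfl

lemma injective_prodCLM (hA : ∀ t, Function.Injective (A t)) :
    ∀ (k : ℕ) (s : Fin k → T), Function.Injective (prodCLM A k s)
  | 0, _ => Function.injective_id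
  | k + 1, _ => (hA _).comp (injective_prodCLM hA k _)

lemma abs_log_norm_prodCLM_sub_le {M : ℝ} (hAM : ∀ t x, |Real.log ‖A t x‖ - Real.log ‖x‖| ≤ M) :
    ∀ (k : ℕ) (s : Fin k → T) (x : Euc d),
      |Real.log ‖prodCLM A k s x‖ - Real.log ‖x‖| ≤ k * M
  | 0, _, _ => by simp [prodCLM]
  | k + 1, s, x => by
    rw [prodCLM_succ_apply, Nat.cast_succ, add_mul, one_mul, add_comm]
    exact (abs_sub_le _ _ _).trans (add_le_add (hAM _ _) (abs_log_norm_prodCLM_sub_le hAM k _ x))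

lemma measurable_prodCLM [MeasurableSpace T] (hA : Measurable A) :
    ∀ k : ℕ, Measurable (prodCLM A k)
  | 0 => measurable_const
  | k + 1 => by
    have hinit : Measurable fun s : Fin (k + 1) → T => prodCLM A k (fun i => s i.castSucc) :=
      (measurable_prodCLM hA k).comp (measurable_pi_lambda _ fun i => measurable_pi_apply _)
    exact isBoundedBilinearMap_comp.continuous.measurable.comp
      ((hA.comp (measurable_pi_apply _)).prodMk hinit)

end Products

section ExpectedLogNorm

variable {T : Type*} [MeasurableSpace T] {d : ℕ}

def expectedLogNorm (Q : Kernel T T) (A : T → (Euc d →L[ℝ] Euc d)) (j : ℕ) (r : T) (x : Euc d) :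
    ℝ :=
  ∫ s, Real.log ‖prodCLM A j s x‖ ∂chainLaw Q j r

variable (Q : Kernel T T) {A : T → (Euc d →L[ℝ] Euc d)} {M : ℝ}

lemma expectedLogNorm_zero (r : T) (x : Euc d) : expectedLogNorm Q A 0 r x = Real.log ‖x‖ := by
  simp [expectedLogNorm, chainLaw, prodCLM]

lemma measurable_log_norm_prodCLM_apply (hA : Measurable A) (k : ℕ) (x : Euc d) :
    Measurable fun s : Fin k → T => Real.log ‖prodCLM A k s x‖ :=
  ((measurable_prodCLM A hA k).apply_continuousLinearMap x).norm.log

lemma integrable_log_norm_prodCLM_apply (hA : Measurable A)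
    (hAM : ∀ t x, |Real.log ‖A t x‖ - Real.log ‖x‖| ≤ M) {μ : Measure (Fin k → T)}
    [IsFiniteMeasure μ] (x : Euc d) : Integrable (fun s => Real.log ‖prodCLM A k s x‖) μ := by
  refine .of_bound (measurable_log_norm_prodCLM_apply hA k x).aestronglyMeasurable
    (k * M + |Real.log ‖x‖|) (ae_of_all _ fun s => ?_)
  rw [Real.norm_eq_abs]
  linarith [abs_log_norm_prodCLM_sub_le A hAM k s x,
    abs_sub_abs_le_abs_sub (Real.log ‖prodCLM A k s x‖) (Real.log ‖x‖)]

variable [IsMarkovKernel Q]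

lemma expectedLogNorm_succ (hA : Measurable A)
    (hAM : ∀ t x, |Real.log ‖A t x‖ - Real.log ‖x‖| ≤ M) (j : ℕ) (r : T) (x : Euc d) :
    expectedLogNorm Q A (j + 1) r x = ∫ s, expectedLogNorm Q A j s (A s x) ∂Q r := by
  rw [expectedLogNorm, integral_chainLaw_succ Q
    (measurable_log_norm_prodCLM_apply hA _ x).stronglyMeasurable
    (integrable_log_norm_prodCLM_apply hA hAM x)]
  simp only [prodCLM_cons]
  rfl

lemma expectedLogNorm_smul (hinj : ∀ t, Function.Injective (A t)) (hA : Measurable A)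
    (hAM : ∀ t x, |Real.log ‖A t x‖ - Real.log ‖x‖| ≤ M) (j : ℕ) (r : T) {x : Euc d}
    (hx : x ≠ 0) {c : ℝ} (hc : c ≠ 0) :
    expectedLogNorm Q A j r (c • x) = Real.log |c| + expectedLogNorm Q A j r x := by
  have hlog : ∀ s : Fin j → T,
      Real.log ‖prodCLM A j s (c • x)‖ = Real.log |c| + Real.log ‖prodCLM A j s x‖ := fun s => by
    rw [map_smul, norm_smul, Real.norm_eq_abs, Real.log_mul (abs_ne_zero.2 hc)
      (norm_ne_zero_iff.2 ((map_ne_zero_iff _ (injective_prodCLM A hinj j s)).2 hx))]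
  simp only [expectedLogNorm, hlog]
  rw [integral_add (integrable_const _) (integrable_log_norm_prodCLM_apply hA hAM x)]
  simp

lemma abs_expectedLogNorm_sub_le (hA : Measurable A)
    (hAM : ∀ t x, |Real.log ‖A t x‖ - Real.log ‖x‖| ≤ M) (j : ℕ) (r : T) (x : Euc d) :
    |expectedLogNorm Q A j r x - Real.log ‖x‖| ≤ j * M := by
  have h := norm_integral_le_of_norm_le_const (μ := chainLaw Q j r)
    (f := fun s => Real.log ‖prodCLM A j s x‖ - Real.log ‖x‖)
    (ae_of_all _ fun s => (Real.norm_eq_abs _).trans_le (abs_log_norm_prodCLM_sub_le A hAM j s x))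
  rwa [integral_sub (integrable_log_norm_prodCLM_apply hA hAM x) (integrable_const _),
    integral_const, probReal_univ, one_smul, mul_one, Real.norm_eq_abs] at h

lemma stronglyMeasurable_expectedLogNorm (hA : Measurable A) (j : ℕ) :
    StronglyMeasurable fun p : T × Euc d => expectedLogNorm Q A j p.1 p.2 := by
  have happly : Measurable fun q : (T × Euc d) × (Fin j → T) => prodCLM A j q.2 q.1.2 :=
    isBoundedBilinearMap_apply.continuous.measurable.comp
      ((measurable_prodCLM A hA j).comp measurable_snd |>.prodMk measurable_fst.snd)
  exact stronglyMeasurable_integral_chainLaw Q happly.norm.log.stronglyMeasurable measurable_fst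

end ExpectedLogNorm

section ExpectedLogNormFrom

variable {T : Type*} [MeasurableSpace T] {d : ℕ}

def expectedLogNormFrom (Q : Kernel T T) (A : T → (Euc d →L[ℝ] Euc d)) :
    ℕ → T → Euc d → ℝ
  | 0, _, x => Real.log ‖x‖
  | j + 1, r, x => expectedLogNorm Q A j r (A r x)

variable (Q : Kernel T T) [IsMarkovKernel Q] {A : T → (Euc d →L[ℝ] Euc d)} {M : ℝ}

lemma expectedLogNormFrom_succ (hA : Measurable A)
    (hAM : ∀ t x, |Real.log ‖A t x‖ - Real.log ‖x‖| ≤ M) (j : ℕ) (r : T) (x : Euc d) :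
    expectedLogNormFrom Q A (j + 1) r x = ∫ s, expectedLogNormFrom Q A j s (A r x) ∂Q r := by
  cases j with
  | zero => simp [expectedLogNormFrom, expectedLogNorm_zero]
  | succ j => exact expectedLogNorm_succ Q hA hAM j r (A r x)

lemma expectedLogNormFrom_smul (hinj : ∀ t, Function.Injective (A t)) (hA : Measurable A)
    (hAM : ∀ t x, |Real.log ‖A t x‖ - Real.log ‖x‖| ≤ M) (j : ℕ) (r : T) {x : Euc d}
    (hx : x ≠ 0) {c : ℝ} (hc : c ≠ 0) :
    expectedLogNormFrom Q A j r (c • x) = Real.log |c| + expectedLogNormFrom Q A j r x := by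
  cases j with
  | zero => rw [expectedLogNormFrom, expectedLogNormFrom, norm_smul, Real.norm_eq_abs,
      Real.log_mul (abs_ne_zero.2 hc) (norm_ne_zero_iff.2 hx)]
  | succ j =>
    rw [expectedLogNormFrom, expectedLogNormFrom, map_smul,
      expectedLogNorm_smul Q hinj hA hAM j r ((map_ne_zero_iff _ (hinj r)).2 hx) hc]

lemma integrable_expectedLogNormFrom (hA : Measurable A)
    (hAM : ∀ t x, |Real.log ‖A t x‖ - Real.log ‖x‖| ≤ M) {μ : Measure T} [IsFiniteMeasure μ]
    (j : ℕ) (x : Euc d) : Integrable (fun s => expectedLogNormFrom Q A j s x) μ := by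
  cases j with
  | zero => exact integrable_const _
  | succ j =>
    refine .of_bound ((stronglyMeasurable_expectedLogNorm Q hA j).comp_measurable
      (measurable_id.prodMk (hA.apply_continuousLinearMap x))).aestronglyMeasurable
      (j * M + M + |Real.log ‖x‖|) (ae_of_all _ fun s => ?_)
    dsimp only [expectedLogNormFrom, Function.comp]
    rw [Real.norm_eq_abs]
    linarith [abs_expectedLogNorm_sub_le Q hA hAM j s (A s x), hAM s x,
      abs_sub_le (expectedLogNorm Q A j s (A s x)) (Real.log ‖A s x‖) (Real.log ‖x‖),
      abs_sub_abs_le_abs_sub (expectedLogNorm Q A j s (A s x)) (Real.log ‖x‖)]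

end ExpectedLogNormFrom

section ProjectiveKernel

variable {T : Type*} [MeasurableSpace T] {d : ℕ} (hd : 0 < d) {A : T → (Euc d →L[ℝ] Euc d)}

lemma coe_projSphere {w : Euc d} (hw : w ≠ 0) : (projSphere hd w : Euc d) = ‖w‖⁻¹ • w := by
  rw [projSphere, dif_neg hw]

lemma measOp_eq_integral_projSphere {Q : Kernel T T}
    {κh : T × UnitSphere d → Measure (T × UnitSphere d)}
    (hκh : ∀ t v, κh (t, v) = (Q t).map (fun s => (s, projSphere hd (A t v.1))))
    (u : T × UnitSphere d → ℝ) (r : T) (v : UnitSphere d) :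
    measOp κh u (r, v) = ∫ s, u (s, projSphere hd (A r v)) ∂Q r := by
  rw [measOp, hκh, (measurableEmbedding_prod_mk_right _).integral_map]

lemma measOpIter_eq_sub_expectedLogNormFrom (Q : Kernel T T) [IsMarkovKernel Q]
    (hinj : ∀ t, Function.Injective (A t)) (hA : Measurable A) {M : ℝ}
    (hAM : ∀ t x, |Real.log ‖A t x‖ - Real.log ‖x‖| ≤ M)
    {κh : T × UnitSphere d → Measure (T × UnitSphere d)}
    (hκh : ∀ t v, κh (t, v) = (Q t).map (fun s => (s, projSphere hd (A t v.1))))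
    {φ : T × UnitSphere d → ℝ} (hφ : ∀ t v, φ (t, v) = Real.log ‖A t v.1‖) :
    ∀ (j : ℕ) (r : T) (v : UnitSphere d), measOpIter κh j φ (r, v)
      = expectedLogNormFrom Q A (j + 1) r v - expectedLogNormFrom Q A j r v
  | 0, r, v => by
    simp [measOpIter, expectedLogNormFrom, expectedLogNorm_zero, hφ, norm_eq_of_mem_sphere v]
  | j + 1, r, v => by
    have hv : (v : Euc d) ≠ 0 := ne_zero_of_mem_unit_sphere v
    set w := A r v
    have hw : w ≠ 0 := (map_ne_zero_iff _ (hinj r)).2 hv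
    have hc : ‖w‖⁻¹ ≠ 0 := inv_ne_zero (norm_ne_zero_iff.2 hw)
    calc measOpIter κh (j + 1) φ (r, v)
        = ∫ s, expectedLogNormFrom Q A (j + 1) s (projSphere hd w)
            - expectedLogNormFrom Q A j s (projSphere hd w) ∂Q r := by
          rw [show measOpIter κh (j + 1) φ = measOp κh (measOpIter κh j φ) from rfl,
            measOp_eq_integral_projSphere hd hκh]
          simp only [measOpIter_eq_sub_expectedLogNormFrom Q hinj hA hAM hκh hφ j]
          rfl
      _ = ∫ s, expectedLogNormFrom Q A (j + 1) s w - expectedLogNormFrom Q A j s w ∂Q r := by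
          simp only [coe_projSphere hd hw, expectedLogNormFrom_smul Q hinj hA hAM _ _ hw hc,
            add_sub_add_left_eq_sub]
      _ = _ := by
          rw [integral_sub (integrable_expectedLogNormFrom Q hA hAM _ w)
            (integrable_expectedLogNormFrom Q hA hAM _ w), ← expectedLogNormFrom_succ Q hA hAM,
            ← expectedLogNormFrom_succ Q hA hAM]

end ProjectiveKernel

/-- Finite-horizon telescoping expansion of the additive process of the
projective Markov kernel for matrix products driven by Markovian noise. -/
theorem finite_horizon_expansion
    (d : ℕ) (hd : 0 < d)
    {T : Type*} [MeasurableSpace T]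
    (Q : Kernel T T) [IsMarkovKernel Q]
    (A : T → (Euc d →L[ℝ] Euc d)) (hA : Measurable A)
    (Ainv : T → (Euc d →L[ℝ] Euc d))
    (hAinv : ∀ t, (A t).comp (Ainv t) = ContinuousLinearMap.id ℝ (Euc d) ∧
      (Ainv t).comp (A t) = ContinuousLinearMap.id ℝ (Euc d))
    (C : ℝ) (hC : 1 ≤ C)
    (hbdd : ∀ t, ‖A t‖ ≤ C) (hbdd' : ∀ t, ‖Ainv t‖ ≤ C)
    (κh : T × UnitSphere d → Measure (T × UnitSphere d))
    (hκh : ∀ t v, κh (t, v) = (Q t).map (fun s => (s, projSphere hd (A t v.1))))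
    (φ : T × UnitSphere d → ℝ)
    (hφ : ∀ t v, φ (t, v) = Real.log ‖A t v.1‖) :
    ∀ n : ℕ, 1 ≤ n → ∀ (t : T) (v : UnitSphere d),
      ∑ j ∈ Finset.range n, measOpIter κh j φ (t, v)
        = ∫ s, Real.log ‖(prodCLM A (n - 1) s) (A t v.1)‖ ∂(chainLaw Q (n - 1) t) := by
  intro n hn t v
  obtain ⟨m, rfl⟩ := Nat.exists_eq_add_of_le' hn
  have hleft : ∀ t x, Ainv t (A t x) = x := fun t x => DFunLike.congr_fun (hAinv t).2 x
  have hinj : ∀ t, Function.Injective (A t) := fun t => Function.LeftInverse.injective (hleft t)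
  have hAM : ∀ t x, |Real.log ‖A t x‖ - Real.log ‖x‖| ≤ Real.log C := fun t x =>
    abs_log_sub_log_le hC (norm_nonneg _) (norm_nonneg _) ((A t).le_of_opNorm_le (hbdd t) x)
      (by simpa only [hleft] using (Ainv t).le_of_opNorm_le (hbdd' t) (A t x))
  rw [Finset.sum_congr rfl fun j _ =>
      measOpIter_eq_sub_expectedLogNormFrom hd Q hinj hA hAM hκh hφ j t v,
    Finset.sum_range_sub (fun j => expectedLogNormFrom Q A j t v)]
  simp [expectedLogNormFrom, expectedLogNorm, norm_eq_of_mem_sphere v]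

end
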